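/- Every stable cut S in an unweighted graph G with maximum degree Δ ≤ 2 satisfies φ(S) ≥ (1/2)·φ(S*) where S* is an optimal single-fault adaptive fault tolerant cut. -/

import Mathlib

/-!
Removing a vertex `v` from `G` destroys exactly the crossing edges at `v`, so the single-fault
value of a cut `X` is `c(X) - max_v a_X(v)`, where `c` is the size of the cut and `a_X(v)` the
crossing degree. Let `n` be the number of non-isolated vertices. Each crossing edge has an
endpoint on either side, and one side holds at most `⌊n / 2⌋` non-isolated vertices, so a cut `T`
has at most `a_T(u) * ⌊n / 2⌋` crossing edges, `u` maximising `a_T`.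
With degrees at most `2`, stability forces `a_S ≥ 1` at every non-isolated vertex, whence
`2 c(S) ≥ n - 1 + a_S(v)` for every `v`. Since `a ≤ 2`, `n ≠ 1` (there are no loops) and
`2 (c(S) - a_S(v))` is even, these bounds give `c(T) - a_T(u) ≤ 2 (c(S) - a_S(v))`.
-/

open Finset

noncomputable section

variable {V : Type*} [Fintype V] [DecidableEq V]

/-- Total weight of edges crossing the cut `S` (each unordered crossing edge counted once). -/
def cutW (w : V → V → ℝ) (S : Finset V) : ℝ :=
  ∑ u ∈ S, ∑ v ∈ Sᶜ, w u v

/-- Weighted degree of a vertex. -/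
def degW (w : V → V → ℝ) (v : V) : ℝ := ∑ u, w v u

/-- Total weight of crossing edges incident to `v`. -/
def crossDegW (w : V → V → ℝ) (S : Finset V) (v : V) : ℝ :=
  ∑ u, if (v ∈ S ∧ u ∉ S) ∨ (u ∈ S ∧ v ∉ S) then w v u else 0

/-- Total weight of crossing edges incident to at least one vertex of `F`. -/
def crossDegSetW (w : V → V → ℝ) (S F : Finset V) : ℝ :=
  ∑ u ∈ S, ∑ v ∈ Sᶜ, if u ∈ F ∨ v ∈ F then w u v else 0

/-- Weight of edges crossing `S` that avoid `F`: the cut `S − F` in `G − F`. -/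
def cutMinusW (w : V → V → ℝ) (S F : Finset V) : ℝ :=
  ∑ u ∈ S, ∑ v ∈ Sᶜ, if u ∉ F ∧ v ∉ F then w u v else 0

/-- The cut obtained from `S` by moving `v` to the opposite side. -/
def flipCut (S : Finset V) (v : V) : Finset V :=
  if v ∈ S then S.erase v else insert v S

/-- The k-fault-tolerant value of the cut `S` against an adaptive adversary. -/
noncomputable def ftValW (w : V → V → ℝ) (S : Finset V) (k : ℕ) : ℝ :=
  sInf ((fun F => cutMinusW w S F) '' {F : Finset V | F.card = k})

/-- The single-fault FT value of the cut `S`. -/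
noncomputable def ft1W (w : V → V → ℝ) (S : Finset V) : ℝ :=
  sInf (Set.range fun v => cutMinusW w S {v})

/-- Total edge weight of the graph. -/
def totalW (w : V → V → ℝ) : ℝ := (∑ u, ∑ v, w u v) / 2

/-- Maximum weighted degree. -/
noncomputable def maxDegW (w : V → V → ℝ) : ℝ := sSup (Set.range (degW w))

set_option linter.unusedSectionVars false

variable {w : V → V → ℝ}

lemma Finset.sum_le_mul_card_inter {ι : Type*} [DecidableEq ι] {f : ι → ℝ} {s N : Finset ι}
    {D : ℝ} (hf : ∀ i ∉ N, f i = 0) (hD : ∀ i, f i ≤ D) : ∑ i ∈ s, f i ≤ D * #(N ∩ s) :=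
  calc ∑ i ∈ s, f i = ∑ i ∈ N ∩ s, f i := by
        refine (sum_subset inter_subset_right fun i hi hiNs => hf i fun hiN => ?_).symm
        exact hiNs (mem_inter.2 ⟨hiN, hi⟩)
    _ ≤ #(N ∩ s) • D := sum_le_card_nsmul _ _ _ fun i _ => hD i
    _ = D * #(N ∩ s) := by rw [nsmul_eq_mul, mul_comm]

lemma Finset.card_add_le_sum_add_one {ι : Type*} [Fintype ι] [DecidableEq ι] {f : ι → ℝ}
    {s : Finset ι} (hf₀ : ∀ i, 0 ≤ f i) (hf₁ : ∀ i ∈ s, 1 ≤ f i) (j : ι) :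
    (#s : ℝ) + f j ≤ ∑ i, f i + 1 := by
  have hcard : (#s : ℝ) ≤ #(s.erase j) + 1 := by
    exact_mod_cast Nat.sub_le_iff_le_add.mp pred_card_le_card_erase
  have hsum : (#(s.erase j) : ℝ) ≤ ∑ i ∈ univ.erase j, f i :=
    calc (#(s.erase j) : ℝ) = ∑ i ∈ s.erase j, (1 : ℝ) := by simp
      _ ≤ ∑ i ∈ s.erase j, f i := sum_le_sum fun i hi => hf₁ i (mem_of_mem_erase hi)
      _ ≤ ∑ i ∈ univ.erase j, f i :=
        sum_le_sum_of_subset_of_nonneg (erase_subset_erase j (subset_univ s)) fun i _ _ => hf₀ i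
  rw [← add_sum_erase univ f (mem_univ j)]
  linarith

lemma crossDegW_of_mem {X : Finset V} {v : V} (hv : v ∈ X) :
    crossDegW w X v = ∑ u ∈ Xᶜ, w v u := by
  simp [crossDegW, hv, sum_ite, filter_notMem_eq_sdiff, compl_eq_univ_sdiff]

lemma crossDegW_of_notMem {X : Finset V} {v : V} (hv : v ∉ X) :
    crossDegW w X v = ∑ u ∈ X, w v u := by
  simp [crossDegW, hv]

lemma cutW_eq_sum_crossDegW (X : Finset V) : cutW w X = ∑ v ∈ X, crossDegW w X v :=
  sum_congr rfl fun _ hv => (crossDegW_of_mem hv).symm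

lemma cutW_eq_sum_compl_crossDegW (hsym : ∀ u v, w u v = w v u) (X : Finset V) :
    cutW w X = ∑ v ∈ Xᶜ, crossDegW w X v := by
  rw [cutW, sum_comm]
  refine sum_congr rfl fun v hv => ?_
  rw [crossDegW_of_notMem (mem_compl.1 hv)]
  exact sum_congr rfl fun u _ => hsym u v

lemma sum_crossDegW (hsym : ∀ u v, w u v = w v u) (X : Finset V) :
    ∑ v, crossDegW w X v = 2 * cutW w X := by
  rw [← sum_add_sum_compl X, ← cutW_eq_sum_crossDegW, ← cutW_eq_sum_compl_crossDegW hsym]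
  ring

lemma cutMinusW_singleton (hsym : ∀ u v, w u v = w v u) (X : Finset V) (v : V) :
    cutMinusW w X {v} = cutW w X - crossDegW w X v := by
  by_cases hv : v ∈ X
  · have h : cutMinusW w X {v} = ∑ u ∈ X.erase v, ∑ x ∈ Xᶜ, w u x := by
      rw [cutMinusW, ← filter_ne', sum_filter]
      refine sum_congr rfl fun u _ => ?_
      by_cases huv : u = v
      · simp [huv]
      · refine (sum_congr rfl fun x hx => ?_).trans (if_pos huv).symm
        have hxv : x ≠ v := by rintro rfl; exact mem_compl.1 hx hv
        simp [huv, hxv]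
    rw [h, sum_erase_eq_sub hv, cutW, crossDegW_of_mem hv]
  · have h : cutMinusW w X {v} = ∑ u ∈ X, ∑ x ∈ Xᶜ.erase v, w u x := by
      rw [cutMinusW]
      refine sum_congr rfl fun u hu => ?_
      have huv : u ≠ v := by rintro rfl; exact hv hu
      rw [← filter_ne', sum_filter]
      simp [huv]
    rw [h, crossDegW_of_notMem hv, cutW, ← sum_sub_distrib]
    refine sum_congr rfl fun u _ => ?_
    rw [sum_erase_eq_sub (mem_compl.2 hv), hsym]

lemma ft1W_eq_iInf (hsym : ∀ u v, w u v = w v u) (X : Finset V) :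
    ft1W w X = ⨅ v, (cutW w X - crossDegW w X v) := by
  simp only [ft1W, cutMinusW_singleton hsym]
  rfl

lemma crossDegW_nonneg (hw : ∀ u v, 0 ≤ w u v) (X : Finset V) (v : V) : 0 ≤ crossDegW w X v :=
  sum_nonneg fun u _ => by split_ifs <;> simp [hw]

lemma crossDegW_le_degW (hw : ∀ u v, 0 ≤ w u v) (X : Finset V) (v : V) :
    crossDegW w X v ≤ degW w v :=
  sum_le_sum fun u _ => by split_ifs <;> simp [hw]

lemma crossDegW_le_cutW (hw : ∀ u v, 0 ≤ w u v) (hsym : ∀ u v, w u v = w v u) (X : Finset V)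
    (v : V) : crossDegW w X v ≤ cutW w X := by
  by_cases hv : v ∈ X
  · rw [cutW_eq_sum_crossDegW]
    exact single_le_sum (fun x _ => crossDegW_nonneg hw X x) hv
  · rw [cutW_eq_sum_compl_crossDegW hsym]
    exact single_le_sum (fun x _ => crossDegW_nonneg hw X x) (mem_compl.2 hv)

lemma exists_natCast_eq_degW (hnat : ∀ u v, ∃ k : ℕ, (k : ℝ) = w u v) (v : V) :
    ∃ k : ℕ, (k : ℝ) = degW w v := by
  choose e he using hnat
  exact ⟨∑ u, e v u, by simp [degW, he]⟩

lemma exists_natCast_eq_crossDegW (hnat : ∀ u v, ∃ k : ℕ, (k : ℝ) = w u v) (X : Finset V)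
    (v : V) : ∃ k : ℕ, (k : ℝ) = crossDegW w X v := by
  choose e he using hnat
  exact ⟨∑ u, if (v ∈ X ∧ u ∉ X) ∨ (u ∈ X ∧ v ∉ X) then e v u else 0,
    by simp [crossDegW, he]⟩

lemma exists_natCast_eq_cutW (hnat : ∀ u v, ∃ k : ℕ, (k : ℝ) = w u v) (X : Finset V) :
    ∃ k : ℕ, (k : ℝ) = cutW w X := by
  choose e he using hnat
  exact ⟨∑ u ∈ X, ∑ v ∈ Xᶜ, e u v, by simp [cutW, he]⟩

def nonIsolated (w : V → V → ℝ) : Finset V := univ.filter fun v => degW w v ≠ 0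

lemma mem_nonIsolated {v : V} : v ∈ nonIsolated w ↔ degW w v ≠ 0 := by
  simp [nonIsolated]

lemma crossDegW_eq_zero_of_notMem_nonIsolated (hw : ∀ u v, 0 ≤ w u v) (X : Finset V) {v : V}
    (hv : v ∉ nonIsolated w) : crossDegW w X v = 0 := by
  rw [mem_nonIsolated, not_not] at hv
  exact le_antisymm (hv ▸ crossDegW_le_degW hw X v) (crossDegW_nonneg hw X v)

lemma cutW_le_mul_card_inter (hw : ∀ u v, 0 ≤ w u v) {X : Finset V} {D : ℝ}
    (hD : ∀ v, crossDegW w X v ≤ D) : cutW w X ≤ D * #(nonIsolated w ∩ X) :=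
  cutW_eq_sum_crossDegW X ▸
    sum_le_mul_card_inter (fun _ => crossDegW_eq_zero_of_notMem_nonIsolated hw X) hD

lemma cutW_le_mul_card_sdiff (hw : ∀ u v, 0 ≤ w u v) (hsym : ∀ u v, w u v = w v u)
    {X : Finset V} {D : ℝ} (hD : ∀ v, crossDegW w X v ≤ D) :
    cutW w X ≤ D * #(nonIsolated w \ X) :=
  sdiff_eq_inter_compl (nonIsolated w) X ▸ cutW_eq_sum_compl_crossDegW hsym X ▸
    sum_le_mul_card_inter (fun _ => crossDegW_eq_zero_of_notMem_nonIsolated hw X) hD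

lemma card_nonIsolated_ne_one (hw : ∀ u v, 0 ≤ w u v) (hsym : ∀ u v, w u v = w v u)
    (hdiag : ∀ v, w v v = 0) : #(nonIsolated w) ≠ 1 := by
  intro h
  obtain ⟨v, hv⟩ := card_eq_one.1 h
  obtain ⟨u, -, hvu⟩ := exists_ne_zero_of_sum_ne_zero
    (mem_nonIsolated.1 (hv ▸ mem_singleton_self v : v ∈ nonIsolated w))
  have huv : u ≠ v := by rintro rfl; exact hvu (hdiag u)
  have hu : u ∈ nonIsolated w := by
    refine mem_nonIsolated.2 fun h0 => hvu ?_
    rw [hsym]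
    exact (sum_eq_zero_iff_of_nonneg fun x _ => hw u x).1 h0 v (mem_univ v)
  exact huv (by simpa [hv] using hu)

lemma one_le_crossDegW (hnat : ∀ u v, ∃ k : ℕ, (k : ℝ) = w u v) {S : Finset V} {v : V}
    (hstable : (degW w v - 1) / 2 < crossDegW w S v) (hv : v ∈ nonIsolated w) :
    1 ≤ crossDegW w S v := by
  obtain ⟨d, hd⟩ := exists_natCast_eq_degW hnat v
  obtain ⟨a, ha⟩ := exists_natCast_eq_crossDegW hnat S v
  have hd0 : d ≠ 0 := by rintro rfl; exact mem_nonIsolated.1 hv (by simp [← hd])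
  rw [← hd, ← ha] at hstable
  have hda : (d : ℝ) < 2 * a + 1 := by linarith
  have hda' : d < 2 * a + 1 := by exact_mod_cast hda
  rw [← ha]
  exact_mod_cast (by omega : 1 ≤ a)

lemma card_nonIsolated_add_crossDegW_le (hnat : ∀ u v, ∃ k : ℕ, (k : ℝ) = w u v)
    (hsym : ∀ u v, w u v = w v u) {S : Finset V}
    (hstable : ∀ v, (degW w v - 1) / 2 < crossDegW w S v) (v : V) :
    (#(nonIsolated w) : ℝ) + crossDegW w S v ≤ 2 * cutW w S + 1 := by
  have hw : ∀ u v, 0 ≤ w u v := fun u v => (hnat u v).elim fun k hk => hk ▸ k.cast_nonneg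
  rw [← sum_crossDegW hsym]
  exact card_add_le_sum_add_one (crossDegW_nonneg hw S)
    (fun x hx => one_le_crossDegW hnat (hstable x) hx) v

lemma cutW_sub_crossDegW_le_two_mul (hsym : ∀ u v, w u v = w v u)
    (h01 : ∀ u v, w u v = 0 ∨ w u v = 1) (hdiag : ∀ v, w v v = 0) (hΔ : ∀ v, degW w v ≤ 2)
    {S : Finset V} (hstable : ∀ v, (degW w v - 1) / 2 < crossDegW w S v)
    (T : Finset V) {u : V} (hu : ∀ x, crossDegW w T x ≤ crossDegW w T u) (v : V) :
    cutW w T - crossDegW w T u ≤ 2 * (cutW w S - crossDegW w S v) := by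
  have hw : ∀ x y, 0 ≤ w x y := fun x y => by rcases h01 x y with h | h <;> simp [h]
  have hnat : ∀ x y, ∃ k : ℕ, (k : ℝ) = w x y := fun x y => by
    rcases h01 x y with h | h
    exacts [⟨0, by simp [h]⟩, ⟨1, by simp [h]⟩]
  have hin := cutW_le_mul_card_inter hw hu
  have hout := cutW_le_mul_card_sdiff hw hsym hu
  have haT := (crossDegW_le_degW hw T u).trans (hΔ u)
  have haS := (crossDegW_le_degW hw S v).trans (hΔ v)
  have haS_le := crossDegW_le_cutW hw hsym S v
  have hlow := card_nonIsolated_add_crossDegW_le hnat hsym hstable v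
  have hn := card_nonIsolated_ne_one hw hsym hdiag
  rw [← card_inter_add_card_sdiff (nonIsolated w) T] at hlow hn
  obtain ⟨cT, hcT⟩ := exists_natCast_eq_cutW hnat T
  obtain ⟨aT, haT_eq⟩ := exists_natCast_eq_crossDegW hnat T u
  obtain ⟨cS, hcS⟩ := exists_natCast_eq_cutW hnat S
  obtain ⟨aS, haS_eq⟩ := exists_natCast_eq_crossDegW hnat S v
  simp only [← hcT, ← haT_eq, ← hcS, ← haS_eq] at hin hout haT haS haS_le hlow ⊢
  norm_cast at hin hout haT haS haS_le hlow
  have key : cT + 2 * aS ≤ 2 * cS + aT := by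
    interval_cases aT <;> omega
  have key' : (cT : ℝ) + 2 * aS ≤ 2 * cS + aT := by exact_mod_cast key
  linarith

theorem stmt_8_general [Nonempty V] (w : V → V → ℝ) (hsym : ∀ u v, w u v = w v u)
    (h01 : ∀ u v, w u v = 0 ∨ w u v = 1) (hdiag : ∀ v, w v v = 0)
    (hΔ : ∀ v, degW w v ≤ 2)
    (S : Finset V) (hstable : ∀ v, (degW w v - 1) / 2 < crossDegW w S v)
    (Sstar : Finset V) :
    ft1W w Sstar / 2 ≤ ft1W w S := by
  obtain ⟨u, -, hu⟩ := exists_max_image univ (crossDegW w Sstar) univ_nonempty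
  have hT : ft1W w Sstar ≤ cutW w Sstar - crossDegW w Sstar u := by
    rw [ft1W_eq_iInf hsym Sstar]
    exact ciInf_le (Set.finite_range _).bddBelow u
  rw [ft1W_eq_iInf hsym S]
  refine le_ciInf fun v => ?_
  linarith [cutW_sub_crossDegW_le_two_mul hsym h01 hdiag hΔ hstable Sstar
    (fun x => hu x (mem_univ x)) v]

theorem stmt_8 [Nonempty V] (w : V → V → ℝ) (hsym : ∀ u v, w u v = w v u)
    (h01 : ∀ u v, w u v = 0 ∨ w u v = 1) (hdiag : ∀ v, w v v = 0)
    (hΔ : ∀ v, degW w v ≤ 2)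
    (S : Finset V) (hstable : ∀ v, (degW w v - 1) / 2 < crossDegW w S v)
    (Sstar : Finset V) (hopt : ∀ S' : Finset V, ft1W w S' ≤ ft1W w Sstar) :
    ft1W w Sstar / 2 ≤ ft1W w S :=
  stmt_8_general w hsym h01 hdiag hΔ S hstable Sstar
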